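/- Turnpikes in DNN training (Proposition 2, optimal-control form). Assume σ : ℝ → ℝ is continuous with σ(0) = 0. Let ℓ : X × U → [0,∞) be any nonnegative stage cost with ℓ(x̄, 0) = 0 for a fixed x̄ ∈ X, let ℓ_f : X → [0,∞), γ > 0, N ∈ ℕ, and let (x*, u*) be an optimal control sequence/trajectory pair from x_0 for the total cost J_N^γ. Suppose there exist a nonnegative storage function λ : X → [0,∞), a class-K function α, and a constant Λ ≥ λ(x_0), such that λ(f(x*_k, u*_k)) − λ(x*_k) ≤ −α(‖x*_k − x̄‖) + ℓ(x*_k, u*_k) for all k ∈ {0, …, N−1}. Suppose further there exists a control sequence ũ_0, …, ũ_{N−1} whose trajectory x̃ from x_0 satisfies Σ_{k=0}^{N−1} ℓ(x̃_k, ũ_k) + γ ℓ_f(x̃_N) ≤ V̂ for some constant V̂ ≥ 0. Then for every ε > 0, the cardinality of {k ∈ {0, …, N−1} : ‖x*_k − x̄‖ > ε} is at most (Λ + V̂)/α(ε), and hence the cardinality of {k : ‖x*_k − x̄‖ ≤ ε} is at least N − (Λ + V̂)/α(ε). -/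

import Mathlib

noncomputable section

/-- The stacked state space `X = (ℝ^d)^D` with the stacked Euclidean norm. -/
abbrev StateX (d D : ℕ) := EuclideanSpace ℝ (Fin D × Fin d)

/-- A control is a weight pair `u = (A, b) ∈ ℝ^{d×d} × ℝ^d`. -/
abbrev Ctrl (d : ℕ) := Matrix (Fin d) (Fin d) ℝ × (Fin d → ℝ)

/-- Residual network ensemble dynamics: every block is updated by
`xⁱ ↦ xⁱ + σ(A xⁱ + b)`, with `σ` applied componentwise. -/
def resDyn {d D : ℕ} (σ : ℝ → ℝ) (x : StateX d D) (u : Ctrl d) : StateX d D :=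
  WithLp.toLp 2 (fun p => x p + σ ((∑ l, u.1 p.2 l * x (p.1, l)) + u.2 p.2))

/-- Trajectory generated by a control sequence from the initial state `x0`. -/
def traj {d D : ℕ} (σ : ℝ → ℝ) (x0 : StateX d D) (u : ℕ → Ctrl d) : ℕ → StateX d D
  | 0 => x0
  | k + 1 => resDyn σ (traj σ x0 u k) (u k)

/-- Total cost `J_N^γ` of a control sequence for the training optimal control problem. -/
def totalCost {d D : ℕ} (σ : ℝ → ℝ) (x0 : StateX d D)
    (ℓ : StateX d D → Ctrl d → ℝ) (ℓf : StateX d D → ℝ) (γ : ℝ) (N : ℕ)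
    (u : ℕ → Ctrl d) : ℝ :=
  (∑ k ∈ Finset.range N, ℓ (traj σ x0 u k) (u k)) + γ * ℓf (traj σ x0 u N)

/-- A function `α : [0,∞) → [0,∞)` is of class K if it is continuous, strictly
increasing and satisfies `α 0 = 0`. -/
def IsClassK (α : ℝ → ℝ) : Prop :=
  ContinuousOn α (Set.Ici 0) ∧ StrictMonoOn α (Set.Ici 0) ∧ α 0 = 0

/-! Summing the dissipation inequality along the optimal trajectory telescopes the storage
function away: `∑ α ‖x*ₖ - x̄‖ ≤ λ(x₀) + ∑ ℓ(x*ₖ, u*ₖ) ≤ Λ + V̂`, the running cost being bounded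
by comparison with `ũ` (the terminal cost is nonnegative). Every step farther than `ε` from `x̄`
contributes at least `α ε` to the left-hand side. -/

open Finset

theorem card_filter_mul_le_sum {ι : Type*} (s : Finset ι) (p : ι → Prop) [DecidablePred p]
    {f : ι → ℝ} {c : ℝ} (hf : ∀ i ∈ s, 0 ≤ f i) (hc : ∀ i ∈ s, p i → c ≤ f i) :
    #(s.filter p) * c ≤ ∑ i ∈ s, f i :=
  calc #(s.filter p) * c = ∑ _i ∈ s.filter p, c := by rw [sum_const, nsmul_eq_mul]
    _ ≤ ∑ i ∈ s.filter p, f i :=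
      sum_le_sum fun i hi => hc i (mem_filter.1 hi).1 (mem_filter.1 hi).2
    _ ≤ ∑ i ∈ s, f i :=
      sum_le_sum_of_subset_of_nonneg (filter_subset _ _) fun i hi _ => hf i hi

theorem card_filter_le_eq_card_sub {ι : Type*} (s : Finset ι) (f : ι → ℝ) (ε : ℝ) :
    (#(s.filter fun i => f i ≤ ε) : ℝ) = #s - #(s.filter fun i => ε < f i) := by
  rw [eq_sub_iff_add_eq, ← Nat.cast_add,
    ← card_filter_add_card_filter_not (s := s) (fun i => ε < f i), add_comm]
  simp only [not_lt]

theorem sum_le_of_dissipation {L a c : ℕ → ℝ} {N : ℕ} (hL : 0 ≤ L N)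
    (hdiss : ∀ k < N, L (k + 1) - L k ≤ -a k + c k) :
    ∑ k ∈ range N, a k ≤ L 0 + ∑ k ∈ range N, c k := by
  have := sum_le_sum fun k hk => hdiss k (mem_range.1 hk)
  rw [sum_range_sub, sum_add_distrib, sum_neg_distrib] at this
  linarith

namespace IsClassK

variable {α : ℝ → ℝ}

theorem pos (hα : IsClassK α) {t : ℝ} (ht : 0 < t) : 0 < α t := by
  simpa only [hα.2.2] using hα.2.1 Set.self_mem_Ici (Set.mem_Ici.2 ht.le) ht

theorem nonneg (hα : IsClassK α) {t : ℝ} (ht : 0 ≤ t) : 0 ≤ α t :=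
  ht.eq_or_lt.elim (fun h => h ▸ hα.2.2.ge) fun h => (hα.pos h).le

protected theorem monotoneOn (hα : IsClassK α) : MonotoneOn α (Set.Ici 0) :=
  hα.2.1.monotoneOn

end IsClassK

theorem sum_stageCost_le_totalCost_of_optimal {d D : ℕ} {σ : ℝ → ℝ} {x0 : StateX d D}
    {ℓ : StateX d D → Ctrl d → ℝ} {ℓf : StateX d D → ℝ} {γ : ℝ} {N : ℕ}
    {ustar : ℕ → Ctrl d} (hℓf : ∀ x, 0 ≤ ℓf x) (hγ : 0 ≤ γ)
    (hopt : ∀ u : ℕ → Ctrl d,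
      totalCost σ x0 ℓ ℓf γ N ustar ≤ totalCost σ x0 ℓ ℓf γ N u)
    (u : ℕ → Ctrl d) :
    ∑ k ∈ range N, ℓ (traj σ x0 ustar k) (ustar k) ≤ totalCost σ x0 ℓ ℓf γ N u := by
  have hopt := hopt u
  have := mul_nonneg hγ (hℓf (traj σ x0 ustar N))
  unfold totalCost at hopt ⊢
  linarith

theorem turnpike_DNN_training_general {d D : ℕ} (σ : ℝ → ℝ)
    (ℓ : StateX d D → Ctrl d → ℝ)
    (xbar : StateX d D)
    (ℓf : StateX d D → ℝ) (hℓf : ∀ x, 0 ≤ ℓf x)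
    (γ : ℝ) (hγ : 0 < γ) (N : ℕ) (x0 : StateX d D)
    (ustar : ℕ → Ctrl d)
    (hopt : ∀ u : ℕ → Ctrl d,
      totalCost σ x0 ℓ ℓf γ N ustar ≤ totalCost σ x0 ℓ ℓf γ N u)
    (lam : StateX d D → ℝ) (hlam : ∀ x, 0 ≤ lam x)
    (α : ℝ → ℝ) (hα : IsClassK α)
    (Λ : ℝ) (hΛ : lam x0 ≤ Λ)
    (hdiss : ∀ k < N,
      lam (resDyn σ (traj σ x0 ustar k) (ustar k)) - lam (traj σ x0 ustar k)
        ≤ -α ‖traj σ x0 ustar k - xbar‖ + ℓ (traj σ x0 ustar k) (ustar k))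
    (Vhat : ℝ)
    (util : ℕ → Ctrl d)
    (hreach : (∑ k ∈ Finset.range N, ℓ (traj σ x0 util k) (util k))
        + γ * ℓf (traj σ x0 util N) ≤ Vhat) :
    ∀ ε > 0,
      (((Finset.range N).filter
          (fun k => ε < ‖traj σ x0 ustar k - xbar‖)).card : ℝ)
        ≤ (Λ + Vhat) / α ε ∧
      (N : ℝ) - (Λ + Vhat) / α ε
        ≤ ((Finset.range N).filter
            (fun k => ‖traj σ x0 ustar k - xbar‖ ≤ ε)).card := by
  intro ε hε
  have hcost : ∑ k ∈ range N, ℓ (traj σ x0 ustar k) (ustar k) ≤ Vhat :=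
    (sum_stageCost_le_totalCost_of_optimal hℓf hγ.le hopt util).trans hreach
  have hα_sum : ∑ k ∈ range N, α ‖traj σ x0 ustar k - xbar‖ ≤ Λ + Vhat := by
    have := sum_le_of_dissipation (L := fun k => lam (traj σ x0 ustar k))
      (a := fun k => α ‖traj σ x0 ustar k - xbar‖)
      (c := fun k => ℓ (traj σ x0 ustar k) (ustar k))
      (hlam _) hdiss
    linarith [show lam (traj σ x0 ustar 0) ≤ Λ from hΛ]
  have hfar : (#((range N).filter fun k => ε < ‖traj σ x0 ustar k - xbar‖) : ℝ)
      ≤ (Λ + Vhat) / α ε := by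
    rw [le_div_iff₀ (hα.pos hε)]
    refine (card_filter_mul_le_sum _ _ (fun k _ => hα.nonneg (norm_nonneg _)) ?_).trans hα_sum
    exact fun k _ hk => hα.monotoneOn hε.le (hε.le.trans hk.le) hk.le
  refine ⟨hfar, ?_⟩
  rw [card_filter_le_eq_card_sub, card_range]
  linarith

/-- Turnpikes in DNN training (Proposition 2, optimal-control form). -/
theorem turnpike_DNN_training {d D : ℕ} (σ : ℝ → ℝ)
    (hσc : Continuous σ) (hσ0 : σ 0 = 0)
    (ℓ : StateX d D → Ctrl d → ℝ) (hℓ : ∀ x u, 0 ≤ ℓ x u)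
    (xbar : StateX d D) (hℓbar : ℓ xbar (0, 0) = 0)
    (ℓf : StateX d D → ℝ) (hℓf : ∀ x, 0 ≤ ℓf x)
    (γ : ℝ) (hγ : 0 < γ) (N : ℕ) (x0 : StateX d D)
    (ustar : ℕ → Ctrl d)
    (hopt : ∀ u : ℕ → Ctrl d,
      totalCost σ x0 ℓ ℓf γ N ustar ≤ totalCost σ x0 ℓ ℓf γ N u)
    (lam : StateX d D → ℝ) (hlam : ∀ x, 0 ≤ lam x)
    (α : ℝ → ℝ) (hα : IsClassK α)
    (Λ : ℝ) (hΛ : lam x0 ≤ Λ)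
    (hdiss : ∀ k < N,
      lam (resDyn σ (traj σ x0 ustar k) (ustar k)) - lam (traj σ x0 ustar k)
        ≤ -α ‖traj σ x0 ustar k - xbar‖ + ℓ (traj σ x0 ustar k) (ustar k))
    (Vhat : ℝ) (hVhat : 0 ≤ Vhat)
    (util : ℕ → Ctrl d)
    (hreach : (∑ k ∈ Finset.range N, ℓ (traj σ x0 util k) (util k))
        + γ * ℓf (traj σ x0 util N) ≤ Vhat) :
    ∀ ε > 0,
      (((Finset.range N).filter
          (fun k => ε < ‖traj σ x0 ustar k - xbar‖)).card : ℝ)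
        ≤ (Λ + Vhat) / α ε ∧
      (N : ℝ) - (Λ + Vhat) / α ε
        ≤ ((Finset.range N).filter
            (fun k => ‖traj σ x0 ustar k - xbar‖ ≤ ε)).card :=
  turnpike_DNN_training_general σ ℓ xbar ℓf hℓf γ hγ N x0 ustar hopt lam hlam α hα Λ hΛ hdiss Vhat
    util hreach
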